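/- Let ρ₁ be the MCP with γ = λ = 1 and let 0 < α < 1. If α < x ≤ 1, then u* = (x − α)/(1 − α) is the unique minimizer of h(u) = ρ₁(u) + (1/(2α))(u − x)². -/
import Mathlib


/-- The MCP penalty with γ = λ = 1. -/
noncomputable def rho1 (u : ℝ) : ℝ := if |u| < 1 then |u| - u ^ 2 / 2 else 1 / 2

/-- If 0 < α < 1 and α < x ≤ 1, then (x − α)/(1 − α) is the unique minimizer of
h(u) = ρ₁(u) + (1/(2α))(u − x)². -/
theorem prox_rho1_middle_case (α x : ℝ) (hα0 : 0 < α) (hα1 : α < 1)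
    (hxl : α < x) (hxu : x ≤ 1) :
    ∀ u : ℝ, u ≠ (x - α) / (1 - α) →
      rho1 ((x - α) / (1 - α)) + (1 / (2 * α)) * ((x - α) / (1 - α) - x) ^ 2
        < rho1 u + (1 / (2 * α)) * (u - x) ^ 2 := by
  set s := (x - α) / (1 - α) with hs_def
  have h1α : (0:ℝ) < 1 - α := by linarith
  have hs_eq : s * (1 - α) = x - α := div_mul_cancel₀ _ (ne_of_gt h1α)
  have hx : x = s * (1 - α) + α := by linarith
  have hs_pos : 0 < s := div_pos (by linarith) h1α
  have hs_le : s ≤ 1 := by rw [hs_def, div_le_one h1α]; linarith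
  have hρs : rho1 s = s - s ^ 2 / 2 := by
    unfold rho1
    rcases lt_or_eq_of_le hs_le with h | h
    · rw [if_pos (by rw [abs_of_pos hs_pos]; exact h)]; rw [abs_of_pos hs_pos]
    · rw [h]; norm_num
  have key : ∀ v : ℝ,
      (v - v ^ 2 / 2 + (1 / (2 * α)) * (v - x) ^ 2)
        - (s - s ^ 2 / 2 + (1 / (2 * α)) * (s - x) ^ 2)
        = ((1 - α) / (2 * α)) * (v - s) ^ 2 := by
    intro v
    rw [hx]
    field_simp
    ring
  have hk : 0 < (1 - α) / (2 * α) := div_pos h1α (by linarith)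
  intro u hu
  rw [hρs]
  rcases lt_or_ge |u| 1 with h | h
  · rw [rho1, if_pos h]
    rcases le_or_gt 0 u with hu0 | hu0
    · rw [abs_of_nonneg hu0]
      have hne : u - s ≠ 0 := sub_ne_zero.mpr hu
      have := mul_pos hk (pow_pos (abs_pos.mpr hne) 2)
      have h2 : ((1 - α) / (2 * α)) * (u - s) ^ 2 > 0 := by
        have : (u - s) ^ 2 > 0 := by positivity
        exact mul_pos hk this
      linarith [key u]
    · rw [abs_of_neg hu0]
      have h2 : ((1 - α) / (2 * α)) * (u - s) ^ 2 ≥ 0 := by positivity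
      linarith [key u]
  · rw [rho1, if_neg (not_lt.mpr h)]
    have hk1 := key 1
    have h2 : ((1 - α) / (2 * α)) * (1 - s) ^ 2 ≥ 0 := by positivity
    rcases le_abs'.mp h with h1 | h1
    · -- u ≤ -1
      have h5 : (1 - x) ^ 2 < (u - x) ^ 2 := by nlinarith
      have h4 : (1 / (2 * α)) * (1 - x) ^ 2 < (1 / (2 * α)) * (u - x) ^ 2 :=
        mul_lt_mul_of_pos_left h5 (by positivity)
      linarith
    · -- 1 ≤ u
      rcases eq_or_lt_of_le h1 with heq | hlt
      · -- u = 1, so s ≠ 1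
        have hsne : s ≠ 1 := fun hc => hu (by rw [← heq, hc])
        have h3 : ((1 - α) / (2 * α)) * (1 - s) ^ 2 > 0 := by
          have : (1 - s) ^ 2 > 0 := by
            have : 1 - s ≠ 0 := fun hc => hsne (by linarith [sub_eq_zero.mp hc])
            positivity
          exact mul_pos hk this
        rw [← heq]
        linarith
      · -- u > 1
        have h4 : (1 / (2 * α)) * (1 - x) ^ 2 < (1 / (2 * α)) * (u - x) ^ 2 := by
          apply mul_lt_mul_of_pos_left _ (by positivity)
          nlinarith
        linarith
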